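/- arXiv:2405.09414 — 5 statements merged into one kernel-verified Lean document; each statement's English description precedes it below -/
import Mathlib

section
/- Let q : ℤ → ℝ be a finitely supported sequence with non-negative entries (q_i ≥ 0 for all i) whose symbol satisfies q(1) = 1, and for an integer L ≥ 1 let q^{[L]} : ℤ → ℝ be the coefficient sequence of q^{[L]}(z) = q(z)·q(z²)⋯q(z^{2^{L−1}}). Then for every L ≥ 1, max{ ∑_{j∈ℤ} |q^{[L]}_{2j}| , ∑_{j∈ℤ} |q^{[L]}_{2j+1}| } = max{ S_e , S_o }, where S_e = ∑_j q_{2j} and S_o = ∑_j q_{2j+1}. -/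
open Filter Topology

/-- The subdivision operator with mask `a`: `(S_a f)_i = ∑_{j ∈ ℤ} a_{i-2j} f_j`. -/
noncomputable def subdiv (a f : ℤ → ℝ) : ℤ → ℝ := fun i => ∑ᶠ j : ℤ, a (i - 2 * j) * f j

/-- A sequence `f : ℤ → ℝ` is bounded. -/
def Bdd (f : ℤ → ℝ) : Prop := ∃ C : ℝ, ∀ i : ℤ, |f i| ≤ C

/-- The forward difference operator `(Δf)_i = f_{i+1} - f_i`. -/
def Δseq (f : ℤ → ℝ) : ℤ → ℝ := fun i => f (i + 1) - f i

/-- Coefficients of the iterated symbol `q^{[L]}(z) = q(z) q(z²) ⋯ q(z^{2^{L-1}})`,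
defined via `q^{[0]}(z) = 1` and `q^{[L+1]}(z) = q(z) · q^{[L]}(z²)`
(so the coefficient recursion is `q^{[L+1]}_i = ∑_j q_{i-2j} q^{[L]}_j`). -/
noncomputable def iterCoeff (q : ℤ → ℝ) : ℕ → ℤ → ℝ
  | 0 => fun i => if i = 0 then 1 else 0
  | L + 1 => fun i => ∑ᶠ j : ℤ, q (i - 2 * j) * iterCoeff q L j

/-!
Reading the recursion `q^{[L+1]}_i = ∑_k q_{i-2k} q^{[L]}_k` only at indices `i = 2j + r`, the
parity sums of `q^{[L+1]}` are `S_e · q^{[L]}(1)` and `S_o · q^{[L]}(1)`, and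
`q^{[L]}(1) = q(1)^L = 1`. Since non-negativity passes from `q` to `q^{[L]}`, the absolute
values change nothing, so the even and odd sums agree separately, not just their maxima.
-/

open Function

section Subdivision

variable {a f : ℤ → ℝ}

theorem finsum_finsum_mul_sub_mul {b : ℤ → ℝ} (hb : b.HasFiniteSupport)
    (hf : f.HasFiniteSupport) (c : ℤ) :
    ∑ᶠ j, ∑ᶠ k, b (j - c * k) * f k = (∑ᶠ j, b j) * ∑ᶠ k, f k := by
  have hshift (k : ℤ) : ∑ᶠ j, b (j - c * k) * f k = (∑ᶠ j, b j) * f k := by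
    rw [← finsum_mul]
    exact congrArg (· * f k) (finsum_comp_equiv (Equiv.subRight (c * k)))
  calc ∑ᶠ j, ∑ᶠ k, b (j - c * k) * f k
      = ∑ᶠ j, ∑ k ∈ hf.toFinset, b (j - c * k) * f k :=
        finsum_congr fun j => finsum_eq_sum_of_support_subset _ fun k hk =>
          hf.mem_toFinset.2 (right_ne_zero_of_mul hk)
    _ = ∑ k ∈ hf.toFinset, ∑ᶠ j, b (j - c * k) * f k :=
        finsum_sum_comm _ _ fun k _ =>
          (hb.comp_of_injective (sub_left_injective (b := c * k))).mul_left _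
    _ = (∑ᶠ j, b j) * ∑ᶠ k, f k := by
        rw [Finset.sum_congr rfl fun k _ => hshift k, ← Finset.mul_sum, finsum_eq_sum _ hf]

theorem hasFiniteSupport_subdiv (ha : a.HasFiniteSupport) (hf : f.HasFiniteSupport) :
    (subdiv a f).HasFiniteSupport := by
  refine ((ha.prod hf).image fun p : ℤ × ℤ => p.1 + 2 * p.2).subset fun i hi => ?_
  by_contra hnot
  refine hi (finsum_eq_zero_of_forall_eq_zero fun k => ?_)
  by_contra hk
  exact hnot ⟨(i - 2 * k, k), ⟨left_ne_zero_of_mul hk, right_ne_zero_of_mul hk⟩, by ring⟩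

theorem finsum_subdiv (ha : a.HasFiniteSupport) (hf : f.HasFiniteSupport) :
    ∑ᶠ i, subdiv a f i = (∑ᶠ i, a i) * ∑ᶠ k, f k :=
  finsum_finsum_mul_sub_mul ha hf 2

theorem finsum_subdiv_two_mul_add (ha : a.HasFiniteSupport) (hf : f.HasFiniteSupport) (r : ℤ) :
    ∑ᶠ j, subdiv a f (2 * j + r) = (∑ᶠ j, a (2 * j + r)) * ∑ᶠ k, f k := by
  have hreindex (j k : ℤ) : a (2 * j + r - 2 * k) = a (2 * (j - 1 * k) + r) := by ring_nf
  have hinj : Injective fun m : ℤ => 2 * m + r := fun m n h => by simp only at h; omega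
  simp only [subdiv, hreindex]
  exact finsum_finsum_mul_sub_mul (b := fun m => a (2 * m + r)) (ha.comp_of_injective hinj) hf 1

end Subdivision

section IteratedSymbol

variable {q : ℤ → ℝ}

theorem iterCoeff_succ (L : ℕ) : iterCoeff q (L + 1) = subdiv q (iterCoeff q L) :=
  rfl

theorem hasFiniteSupport_iterCoeff (hq : q.HasFiniteSupport) :
    ∀ L, (iterCoeff q L).HasFiniteSupport
  | 0 => (Set.finite_singleton 0).subset fun i hi => by
      by_contra h
      exact hi (if_neg h)
  | L + 1 => hasFiniteSupport_subdiv hq (hasFiniteSupport_iterCoeff hq L)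

theorem iterCoeff_nonneg (hq : ∀ i, 0 ≤ q i) : ∀ L i, 0 ≤ iterCoeff q L i
  | 0, i => by simp only [iterCoeff]; split_ifs <;> norm_num
  | L + 1, _ => finsum_nonneg fun _ => mul_nonneg (hq _) (iterCoeff_nonneg hq L _)

theorem finsum_iterCoeff (hq : q.HasFiniteSupport) (hsum : ∑ᶠ i, q i = 1) :
    ∀ L, ∑ᶠ i, iterCoeff q L i = 1
  | 0 => by rw [finsum_eq_single (iterCoeff q 0) 0 fun i hi => if_neg hi]; rfl
  | L + 1 => by
      rw [iterCoeff_succ, finsum_subdiv hq (hasFiniteSupport_iterCoeff hq L), hsum,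
        finsum_iterCoeff hq hsum L, one_mul]

theorem finsum_iterCoeff_succ_two_mul_add (hq : q.HasFiniteSupport) (hsum : ∑ᶠ i, q i = 1)
    (L : ℕ) (r : ℤ) : ∑ᶠ j, iterCoeff q (L + 1) (2 * j + r) = ∑ᶠ j, q (2 * j + r) := by
  rw [iterCoeff_succ, finsum_subdiv_two_mul_add hq (hasFiniteSupport_iterCoeff hq L),
    finsum_iterCoeff hq hsum, mul_one]

end IteratedSymbol

/-- If `q` is finitely supported with non-negative entries and `q(1) = 1`,
then for every `L ≥ 1`,
`max { ∑_j |q^{[L]}_{2j}|, ∑_j |q^{[L]}_{2j+1}| } = max { S_e, S_o }`,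
where `S_e = ∑_j q_{2j}` and `S_o = ∑_j q_{2j+1}`. -/
theorem iter_norm_eq_max_even_odd_of_nonneg (q : ℤ → ℝ)
    (hfin : (Function.support q).Finite) (hnn : ∀ i : ℤ, 0 ≤ q i)
    (hsum : ∑ᶠ i : ℤ, q i = 1) (L : ℕ) (hL : 1 ≤ L) :
    max (∑ᶠ j : ℤ, |iterCoeff q L (2 * j)|) (∑ᶠ j : ℤ, |iterCoeff q L (2 * j + 1)|) =
      max (∑ᶠ j : ℤ, q (2 * j)) (∑ᶠ j : ℤ, q (2 * j + 1)) := by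
  obtain ⟨n, rfl⟩ := Nat.exists_eq_add_of_le' hL
  have heven := finsum_iterCoeff_succ_two_mul_add hfin hsum n 0
  have hodd := finsum_iterCoeff_succ_two_mul_add hfin hsum n 1
  simp only [add_zero] at heven
  simp only [abs_of_nonneg (iterCoeff_nonneg hnn _ _), heven, hodd]
end

section
/- Let a : ℤ → ℝ be a finitely supported mask whose symbol factors as a(z) = (1 + z)·q(z), where the finitely supported sequence q : ℤ → ℝ has non-negative entries, satisfies q(1) = 1, and satisfies max{S_e, S_o} < 1 with S_e = ∑_j q_{2j} and S_o = ∑_j q_{2j+1}. Then the subdivision scheme S_a is uniformly convergent, and μ = max{S_e, S_o} is a contractivity factor with contractivity number 1, i.e. sup_i |Δ(S_a f)_i| ≤ μ · sup_i |Δf_i| for every bounded f. -/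
open Filter Topology

/-- The refinements `f^k = S_a^k f⁰` converge uniformly to the continuous function `fstar`:
for every `N > 0`, `sup_{|i| ≤ N·2^k} |f^k_i - fstar(2^{-k} i)| → 0` as `k → ∞`. -/
def ConvergesTo (a f0 : ℤ → ℝ) (fstar : ℝ → ℝ) : Prop :=
  Continuous fstar ∧ ∀ N : ℝ, 0 < N →
    Filter.Tendsto (fun k : ℕ =>
      ⨆ i : {i : ℤ // |(i : ℝ)| ≤ N * 2 ^ k},
        |(subdiv a)^[k] f0 i.1 - fstar ((i.1 : ℝ) / 2 ^ k)|) Filter.atTop (nhds 0)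

/-- The subdivision scheme `S_a` is uniformly convergent: every bounded initial sequence
has a continuous limit function, and some bounded initial sequence has a nonzero limit. -/
def UniformlyConvergent (a : ℤ → ℝ) : Prop :=
  (∀ f0 : ℤ → ℝ, Bdd f0 → ∃ fstar : ℝ → ℝ, ConvergesTo a f0 fstar) ∧
  (∃ f0 fstar, Bdd f0 ∧ ConvergesTo a f0 fstar ∧ fstar ≠ fun _ => 0)

/-!
The mask factorization `a(z) = (1 + z) q(z)` makes `S_q` the difference scheme of `S_a`:
`Δ(S_a f)_i = (S_q Δf)_{i-1}`. Since `q ≥ 0`, the parity sums of `q` bound `S_q` in the sup norm,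
so the differences of `f^k = S_a^k f⁰` decay like `μ^k`. The mask `a` is non-negative, has
parity sums `1` and bounded support, so `f^{k+1}_{i'}` is an average of values `f^k_j` with
`j` near `i'/2`; hence the step functions `x ↦ f^k(round (2^k x))` move by `O(μ^k)` from one
level to the next, converge uniformly, and their limit is continuous because their oscillation
at scale `2^{-k}` is `O(μ^k)` as well.
-/
lemma finite_support_comp_sub_two_mul {q : ℤ → ℝ} (hq : (Function.support q).Finite) (c : ℤ) :
    (Function.support fun j : ℤ => q (c - 2 * j)).Finite :=
  hq.preimage fun x _ y _ h => by omega

lemma finite_support_comp_two_mul_add {q : ℤ → ℝ} (hq : (Function.support q).Finite) (r : ℤ) :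
    (Function.support fun j : ℤ => q (2 * j + r)).Finite :=
  hq.preimage fun x _ y _ h => by omega

lemma finite_support_comp_sub_two_mul_mul {q : ℤ → ℝ} (hq : (Function.support q).Finite)
    (c : ℤ) (f : ℤ → ℝ) : (Function.support fun j : ℤ => q (c - 2 * j) * f j).Finite :=
  (finite_support_comp_sub_two_mul hq c).subset (Function.support_mul_subset_left _ _)

lemma finsum_comp_sub_two_mul (q : ℤ → ℝ) (m : ℤ) :
    ∑ᶠ j : ℤ, q (m - 2 * j) =
      if Even m then ∑ᶠ j : ℤ, q (2 * j) else ∑ᶠ j : ℤ, q (2 * j + 1) := by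
  obtain ⟨c, rfl | rfl⟩ := Int.even_or_odd' m
  · rw [if_pos (even_two_mul c), ← finsum_comp_equiv (Equiv.subLeft c)]
    exact finsum_congr fun j => by simp only [Equiv.subLeft_apply]; ring_nf
  · rw [if_neg (Int.not_even_iff_odd.mpr (odd_two_mul_add_one c)),
      ← finsum_comp_equiv (Equiv.subLeft c)]
    exact finsum_congr fun j => by simp only [Equiv.subLeft_apply]; ring_nf

lemma finsum_eq_finsum_even_add_finsum_odd {q : ℤ → ℝ} (hq : (Function.support q).Finite) :
    ∑ᶠ n : ℤ, q n = ∑ᶠ j : ℤ, q (2 * j) + ∑ᶠ j : ℤ, q (2 * j + 1) := by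
  have heven := finite_support_comp_two_mul_add hq 0
  simp only [add_zero] at heven
  rw [← finsum_add_distrib heven (finite_support_comp_two_mul_add hq 1),
    ← finsum_comp_equiv (Int.divModEquiv 2).symm,
    finsum_curry _ (hq.preimage (Equiv.injective _).injOn)]
  refine finsum_congr fun j => ?_
  rw [finsum_eq_sum_of_fintype, Fin.sum_univ_two]
  simp [mul_comm]

lemma abs_finsum_le_finsum {g h : ℤ → ℝ} (hh : (Function.support h).Finite)
    (hle : ∀ j, |g j| ≤ h j) : |∑ᶠ j, g j| ≤ ∑ᶠ j, h j := by
  have hg : (Function.support g).Finite :=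
    hh.subset fun j hj h0 => hj (abs_nonpos_iff.mp (h0 ▸ hle j))
  refine abs_le.mpr ⟨?_, finsum_le_finsum' hg hh fun j => (le_abs_self _).trans (hle j)⟩
  rw [← finsum_neg_distrib]
  exact finsum_le_finsum' (by simpa [Function.HasFiniteSupport] using hh) hg
    fun j => (neg_le_neg (hle j)).trans (neg_abs_le _)

lemma Bdd.Δseq {f : ℤ → ℝ} (hf : Bdd f) : Bdd (Δseq f) := by
  obtain ⟨C, hC⟩ := hf
  exact ⟨C + C, fun i => (abs_sub _ _).trans (add_le_add (hC _) (hC _))⟩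

lemma Bdd.bddAbove_range_abs {f : ℤ → ℝ} (hf : Bdd f) : BddAbove (Set.range fun i => |f i|) := by
  obtain ⟨C, hC⟩ := hf
  exact ⟨C, Set.forall_mem_range.mpr hC⟩

lemma abs_sub_le_natAbs_mul_of_abs_Δseq_le {f : ℤ → ℝ} {D : ℝ} (hD : ∀ j, |Δseq f j| ≤ D)
    (i j : ℤ) : |f j - f i| ≤ (j - i).natAbs * D := by
  have hforward (i : ℤ) (n : ℕ) : |f (i + n) - f i| ≤ n * D := by
    have htelescope := Finset.sum_range_sub (fun m : ℕ => f (i + m)) n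
    push_cast [← add_assoc, add_zero] at htelescope
    calc |f (i + n) - f i| = |∑ m ∈ Finset.range n, Δseq f (i + m)| := by
          rw [← htelescope]; rfl
      _ ≤ ∑ m ∈ Finset.range n, |Δseq f (i + m)| := Finset.abs_sum_le_sum_abs _ _
      _ ≤ n * D :=
        (Finset.sum_le_sum fun m (_ : m ∈ Finset.range n) => hD (i + m)).trans_eq (by simp)
  rcases le_total i j with hij | hji
  · have := hforward i (j - i).natAbs
    rwa [show i + ((j - i).natAbs : ℤ) = j by omega] at this
  · have := hforward j (j - i).natAbs
    rwa [show j + ((j - i).natAbs : ℤ) = i by omega, abs_sub_comm] at this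

lemma subdiv_sub_const {a : ℤ → ℝ} (ha : (Function.support a).Finite) (f : ℤ → ℝ) (c : ℝ)
    (i : ℤ) : subdiv a (fun j => f j - c) i = subdiv a f i - (∑ᶠ j : ℤ, a (i - 2 * j)) * c := by
  have hsupp := finite_support_comp_sub_two_mul ha i
  simp only [subdiv, mul_sub]
  rw [finsum_sub_distrib (hsupp.subset (Function.support_mul_subset_left _ _))
    (hsupp.subset (Function.support_mul_subset_left _ _)), finsum_mul]

lemma abs_subdiv_le {q g : ℤ → ℝ} (hq : (Function.support q).Finite) (hnn : ∀ i, 0 ≤ q i)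
    {D : ℝ} {i : ℤ} (hg : ∀ j, q (i - 2 * j) ≠ 0 → |g j| ≤ D) :
    |subdiv q g i| ≤ (∑ᶠ j : ℤ, q (i - 2 * j)) * D := by
  rw [finsum_mul]
  refine abs_finsum_le_finsum
    ((finite_support_comp_sub_two_mul hq i).subset (Function.support_mul_subset_left _ _)) ?_
  intro j
  rcases eq_or_ne (q (i - 2 * j)) 0 with h0 | h0
  · simp [h0]
  · rw [abs_mul, abs_of_nonneg (hnn _)]
    exact mul_le_mul_of_nonneg_left (hg j h0) (hnn _)

lemma abs_subdiv_sub_le {a f : ℤ → ℝ} (ha : (Function.support a).Finite) (hann : ∀ m, 0 ≤ a m)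
    (hmask : ∀ i, ∑ᶠ j : ℤ, a (i - 2 * j) = 1) {M : ℕ} (hM : ∀ m, a m ≠ 0 → m.natAbs ≤ M)
    {D : ℝ} (hD : ∀ j, |Δseq f j| ≤ D) {i i' : ℤ} (hii : (i' - 2 * i).natAbs ≤ 1) :
    |subdiv a f i' - f i| ≤ (M + 1) * D := by
  have hD0 : 0 ≤ D := (abs_nonneg _).trans (hD 0)
  have hcentre := subdiv_sub_const ha f (f i) i'
  rw [hmask, one_mul] at hcentre
  rw [← hcentre]
  refine (abs_subdiv_le ha hann fun j hj => ?_).trans_eq (by rw [hmask, one_mul])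
  refine (abs_sub_le_natAbs_mul_of_abs_Δseq_le hD i j).trans (mul_le_mul_of_nonneg_right ?_ hD0)
  have := hM _ hj
  exact_mod_cast (by omega : (j - i).natAbs ≤ M + 1)

section Factorization

variable {a q : ℤ → ℝ} (hq : (Function.support q).Finite) (hfac : ∀ i, a i = q i + q (i - 1))
include hq hfac

lemma finsum_mask_eq_one (hq1 : ∑ᶠ i : ℤ, q i = 1) (i : ℤ) : ∑ᶠ j : ℤ, a (i - 2 * j) = 1 := by
  have hsplit (j : ℤ) : a (i - 2 * j) = q (i - 2 * j) + q (i - 1 - 2 * j) := by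
    rw [hfac]; ring_nf
  rw [finsum_congr hsplit, finsum_add_distrib (finite_support_comp_sub_two_mul hq i)
    (finite_support_comp_sub_two_mul hq (i - 1)), finsum_comp_sub_two_mul,
    finsum_comp_sub_two_mul, ← hq1, finsum_eq_finsum_even_add_finsum_odd hq]
  rcases Int.even_or_odd i with hi | hi
  · simp [hi]
  · simp [hi, Int.not_even_iff_odd, add_comm]

lemma subdiv_eq_add (f : ℤ → ℝ) (i : ℤ) :
    subdiv a f i = ∑ᶠ j : ℤ, q (i - 2 * j) * f j + ∑ᶠ j : ℤ, q (i - 1 - 2 * j) * f j := by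
  rw [subdiv, ← finsum_add_distrib (finite_support_comp_sub_two_mul_mul hq i f)
    (finite_support_comp_sub_two_mul_mul hq (i - 1) f)]
  exact finsum_congr fun j => by rw [hfac, add_mul, sub_right_comm]

lemma Δseq_subdiv (f : ℤ → ℝ) (i : ℤ) : Δseq (subdiv a f) i = subdiv q (Δseq f) (i - 1) := by
  have hshift : ∑ᶠ j : ℤ, q (i - 1 - 2 * j) * f (j + 1) = ∑ᶠ j : ℤ, q (i + 1 - 2 * j) * f j := by
    rw [← finsum_comp_equiv (Equiv.addRight 1) (f := fun j => q (i + 1 - 2 * j) * f j)]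
    exact finsum_congr fun j => by simp only [Equiv.coe_addRight]; ring_nf
  rw [Δseq, subdiv_eq_add hq hfac, subdiv_eq_add hq hfac, subdiv]
  simp only [Δseq, mul_sub]
  rw [finsum_sub_distrib (finite_support_comp_sub_two_mul_mul hq _ _)
    (finite_support_comp_sub_two_mul_mul hq _ _), hshift, add_sub_cancel_right]
  ring

lemma abs_Δseq_subdiv_le (hnn : ∀ i, 0 ≤ q i) {f : ℤ → ℝ} {D : ℝ} (hD : ∀ j, |Δseq f j| ≤ D)
    (i : ℤ) :
    |Δseq (subdiv a f) i| ≤ max (∑ᶠ j : ℤ, q (2 * j)) (∑ᶠ j : ℤ, q (2 * j + 1)) * D := by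
  rw [Δseq_subdiv hq hfac]
  refine (abs_subdiv_le hq hnn fun j _ => hD j).trans
    (mul_le_mul_of_nonneg_right ?_ ((abs_nonneg _).trans (hD 0)))
  rw [finsum_comp_sub_two_mul]
  split_ifs
  exacts [le_max_left _ _, le_max_right _ _]

lemma iSup_abs_Δseq_subdiv_le (hnn : ∀ i, 0 ≤ q i) {f : ℤ → ℝ} (hf : Bdd f) :
    ⨆ i : ℤ, |Δseq (subdiv a f) i| ≤
      max (∑ᶠ j : ℤ, q (2 * j)) (∑ᶠ j : ℤ, q (2 * j + 1)) * ⨆ i : ℤ, |Δseq f i| :=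
  Real.iSup_le (abs_Δseq_subdiv_le hq hfac hnn fun j => le_ciSup hf.Δseq.bddAbove_range_abs j)
    (mul_nonneg ((finsum_nonneg fun _ => hnn _).trans (le_max_left _ _))
      (Real.iSup_nonneg fun _ => abs_nonneg _))

end Factorization

section Contractive

variable {a : ℤ → ℝ} {μ : ℝ}
  (hcontr : ∀ (f : ℤ → ℝ) (D : ℝ), (∀ j, |Δseq f j| ≤ D) → ∀ j, |Δseq (subdiv a f) j| ≤ μ * D)
include hcontr

lemma abs_Δseq_iterate_subdiv_le {f : ℤ → ℝ} {D : ℝ} (hD : ∀ j, |Δseq f j| ≤ D) (k : ℕ) (j : ℤ) :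
    |Δseq ((subdiv a)^[k] f) j| ≤ μ ^ k * D := by
  induction k generalizing j with
  | zero => simpa using hD j
  | succ k ih =>
    rw [Function.iterate_succ_apply', pow_succ', mul_assoc]
    exact hcontr _ _ ih j

end Contractive

lemma convergesTo_one {a : ℤ → ℝ} (hmask : ∀ i, ∑ᶠ j : ℤ, a (i - 2 * j) = 1) :
    ConvergesTo a (fun _ => 1) (fun _ => 1) := by
  have hone (k : ℕ) : (subdiv a)^[k] (fun _ => 1) = fun _ => 1 :=
    Function.iterate_fixed (funext fun i => by simp [subdiv, hmask]) k
  exact ⟨continuous_const, fun N _ => by simp [hone, Real.iSup_const_zero]⟩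

lemma exists_forall_abs_sub_le_of_abs_sub_le_geometric {X : Type*} {h : ℕ → X → ℝ} {C r : ℝ}
    (hr : r < 1) (hh : ∀ k x, |h (k + 1) x - h k x| ≤ C * r ^ k) :
    ∃ F : X → ℝ, ∀ k x, |h k x - F x| ≤ C * r ^ k / (1 - r) := by
  have hdist (x : X) (k : ℕ) : dist (h k x) (h (k + 1) x) ≤ C * r ^ k := by
    rw [Real.dist_eq, abs_sub_comm]; exact hh k x
  choose F hF using fun x =>
    cauchySeq_tendsto_of_complete (cauchySeq_of_le_geometric r C hr (hdist x))
  exact ⟨F, fun k x => dist_le_of_le_geometric_of_tendsto r C hr (hdist x) (hF x) k⟩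

lemma continuous_of_forall_abs_sub_le {h : ℕ → ℝ → ℝ} {F : ℝ → ℝ} {ε δ : ℕ → ℝ}
    (hε : Tendsto ε atTop (𝓝 0)) (hδ : ∀ k, 0 < δ k) (happrox : ∀ k x, |h k x - F x| ≤ ε k)
    (hosc : ∀ k x y, |x - y| < δ k → |h k x - h k y| ≤ ε k) : Continuous F := by
  rw [Metric.continuous_iff]
  intro x e he
  obtain ⟨k, hk⟩ := (hε.eventually (gt_mem_nhds (by positivity : 0 < e / 3))).exists
  refine ⟨δ k, hδ k, fun y hy => ?_⟩
  rw [Real.dist_eq] at hy ⊢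
  have hy' := happrox k y
  rw [abs_sub_comm] at hy'
  linarith [abs_sub_le (F y) (h k y) (F x), abs_sub_le (h k y) (h k x) (F x), hosc k y x hy,
    happrox k x]

lemma Int.natAbs_le_one_of_abs_lt_two {m : ℤ} (h : |(m : ℝ)| < 2) : m.natAbs ≤ 1 := by
  have : |m| < 2 := by exact_mod_cast h
  rw [abs_lt] at this
  omega

lemma natAbs_round_sub_round_le_one {x y : ℝ} (h : |x - y| < 1) :
    (round x - round y).natAbs ≤ 1 := by
  refine Int.natAbs_le_one_of_abs_lt_two ?_
  have hx := abs_le.mp (abs_sub_round x)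
  have hy := abs_le.mp (abs_sub_round y)
  rw [abs_lt] at h
  push_cast
  exact abs_lt.mpr ⟨by linarith, by linarith⟩

lemma natAbs_round_two_mul_sub_le_one (x : ℝ) : (round (2 * x) - 2 * round x).natAbs ≤ 1 := by
  refine Int.natAbs_le_one_of_abs_lt_two ?_
  have hx := abs_le.mp (abs_sub_round x)
  have h2x := abs_le.mp (abs_sub_round (2 * x))
  push_cast
  exact abs_lt.mpr ⟨by linarith, by linarith⟩

noncomputable def gridStep (k : ℕ) (f : ℤ → ℝ) (x : ℝ) : ℝ := f (round (2 ^ k * x))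

lemma gridStep_intCast_div (k : ℕ) (f : ℤ → ℝ) (i : ℤ) : gridStep k f (i / 2 ^ k) = f i := by
  simp [gridStep, mul_div_cancel₀]

lemma abs_gridStep_sub_gridStep_le {f : ℤ → ℝ} {D : ℝ} (hD : ∀ j, |Δseq f j| ≤ D) {k : ℕ}
    {x y : ℝ} (hxy : |x - y| < (2 ^ k)⁻¹) : |gridStep k f x - gridStep k f y| ≤ D := by
  have hD0 : 0 ≤ D := (abs_nonneg _).trans (hD 0)
  have hround : (round (2 ^ k * x) - round (2 ^ k * y)).natAbs ≤ 1 := by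
    refine natAbs_round_sub_round_le_one ?_
    rw [← mul_sub, abs_mul, abs_of_pos (by positivity)]
    exact (mul_lt_mul_of_pos_left hxy (by positivity)).trans_eq (mul_inv_cancel₀ (by positivity))
  refine (abs_sub_le_natAbs_mul_of_abs_Δseq_le hD _ _).trans ?_
  exact mul_le_of_le_one_left hD0 (by exact_mod_cast hround)

lemma abs_gridStep_subdiv_sub_le {a f : ℤ → ℝ} (ha : (Function.support a).Finite)
    (hann : ∀ m, 0 ≤ a m) (hmask : ∀ i, ∑ᶠ j : ℤ, a (i - 2 * j) = 1) {M : ℕ}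
    (hM : ∀ m, a m ≠ 0 → m.natAbs ≤ M) {D : ℝ} (hD : ∀ j, |Δseq f j| ≤ D) (k : ℕ) (x : ℝ) :
    |gridStep (k + 1) (subdiv a f) x - gridStep k f x| ≤ (M + 1) * D := by
  refine abs_subdiv_sub_le ha hann hmask hM hD ?_
  rw [pow_succ', mul_assoc]
  exact natAbs_round_two_mul_sub_le_one _

theorem exists_convergesTo_of_contractive {a : ℤ → ℝ} {μ : ℝ} (ha : (Function.support a).Finite)
    (hann : ∀ m, 0 ≤ a m) (hmask : ∀ i, ∑ᶠ j : ℤ, a (i - 2 * j) = 1) (hμ0 : 0 ≤ μ) (hμ : μ < 1)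
    (hcontr : ∀ (f : ℤ → ℝ) (D : ℝ), (∀ j, |Δseq f j| ≤ D) → ∀ j, |Δseq (subdiv a f) j| ≤ μ * D)
    {f0 : ℤ → ℝ} (hf0 : Bdd f0) : ∃ F : ℝ → ℝ, ConvergesTo a f0 F := by
  obtain ⟨D, hD⟩ := hf0.Δseq
  have hD0 : 0 ≤ D := (abs_nonneg _).trans (hD 0)
  obtain ⟨M, hM⟩ := (ha.image Int.natAbs).bddAbove
  have hMa (m : ℤ) (hm : a m ≠ 0) : m.natAbs ≤ M := hM (Set.mem_image_of_mem _ hm)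
  set h : ℕ → ℝ → ℝ := fun k => gridStep k ((subdiv a)^[k] f0)
  have hDk := abs_Δseq_iterate_subdiv_le hcontr hD
  have hstep (k : ℕ) (x : ℝ) : |h (k + 1) x - h k x| ≤ (M + 1) * D * μ ^ k := by
    simp only [h, Function.iterate_succ_apply']
    exact (abs_gridStep_subdiv_sub_le ha hann hmask hMa (hDk k) k x).trans_eq (by ring)
  obtain ⟨F, hF⟩ := exists_forall_abs_sub_le_of_abs_sub_le_geometric hμ hstep
  set E := (M + 1) * D / (1 - μ)
  have hE0 : 0 ≤ E := div_nonneg (by positivity) (by linarith)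
  have happrox (k : ℕ) (x : ℝ) : |h k x - F x| ≤ E * μ ^ k :=
    (hF k x).trans_eq (by ring)
  have hgeom (c : ℝ) : Tendsto (fun k : ℕ => c * μ ^ k) atTop (𝓝 0) := by
    simpa using (tendsto_pow_atTop_nhds_zero_of_lt_one hμ0 hμ).const_mul c
  refine ⟨F, continuous_of_forall_abs_sub_le (δ := fun k => (2 ^ k)⁻¹) (hgeom (E + D))
    (fun k => by positivity)
    (fun k x => (happrox k x).trans ?_) (fun k x y hxy => ?_), fun N _ => ?_⟩
  · gcongr; linarith
  · refine (abs_gridStep_sub_gridStep_le (hDk k) hxy).trans ?_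
    nlinarith [pow_nonneg hμ0 k]
  · refine squeeze_zero (fun k => Real.iSup_nonneg fun _ => abs_nonneg _)
      (fun k => Real.iSup_le (fun i => ?_) (by positivity)) (hgeom E)
    simpa [h, gridStep_intCast_div] using happrox k (i.1 / 2 ^ k)

/-- If the mask `a` factors as `a(z) = (1+z) q(z)` (i.e. `a_i = q_i + q_{i-1}`)
with `q` finitely supported, non-negative, `q(1) = 1` and `max{S_e, S_o} < 1`, then the scheme
`S_a` is uniformly convergent and `μ = max{S_e, S_o}` is a contractivity factor with
contractivity number `1`. -/
theorem convergent_of_nonneg_difference_mask (a q : ℤ → ℝ)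
    (ha : (Function.support a).Finite) (hq : (Function.support q).Finite)
    (hfac : ∀ i : ℤ, a i = q i + q (i - 1))
    (hnn : ∀ i : ℤ, 0 ≤ q i) (hq1 : ∑ᶠ i : ℤ, q i = 1)
    (hμ : max (∑ᶠ j : ℤ, q (2 * j)) (∑ᶠ j : ℤ, q (2 * j + 1)) < 1) :
    UniformlyConvergent a ∧
      ∀ f : ℤ → ℝ, Bdd f →
        (⨆ i : ℤ, |Δseq (subdiv a f) i|) ≤
          max (∑ᶠ j : ℤ, q (2 * j)) (∑ᶠ j : ℤ, q (2 * j + 1)) * ⨆ i : ℤ, |Δseq f i| := by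
  have hann (m : ℤ) : 0 ≤ a m := hfac m ▸ add_nonneg (hnn m) (hnn (m - 1))
  have hmask := finsum_mask_eq_one hq hfac hq1
  have hμ0 : 0 ≤ max (∑ᶠ j : ℤ, q (2 * j)) (∑ᶠ j : ℤ, q (2 * j + 1)) :=
    (finsum_nonneg fun _ => hnn _).trans (le_max_left _ _)
  have hcontr (f : ℤ → ℝ) (D : ℝ) (hD : ∀ j, |Δseq f j| ≤ D) (i : ℤ) :=
    abs_Δseq_subdiv_le hq hfac hnn hD i
  refine ⟨⟨fun f0 hf0 => exists_convergesTo_of_contractive ha hann hmask hμ0 hμ hcontr hf0,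
    fun _ => 1, fun _ => 1, ⟨1, fun _ => by simp⟩, convergesTo_one hmask,
    fun h => by simpa using congrFun h 0⟩, fun f hf => iSup_abs_Δseq_subdiv_le hq hfac hnn hf⟩
end

section
/- Let q : ℤ → ℝ be a finitely supported sequence whose symbol satisfies q(1) = 1 and |q(−1)| > 1. Then for every integer L ≥ 1, the coefficient sequence q^{[L]} of q^{[L]}(z) = q(z)·q(z²)⋯q(z^{2^{L−1}}) satisfies max{ ∑_{j∈ℤ} |q^{[L]}_{2j}| , ∑_{j∈ℤ} |q^{[L]}_{2j+1}| } ≥ max{ |S_e| , |S_o| } > 1, where S_e = ∑_j q_{2j} and S_o = ∑_j q_{2j+1}. -/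
open Filter Topology

namespace IterAux

/-- Parity splitting of a finitely supported sum over `ℤ`. -/
lemma parity_split (f : ℤ → ℝ) (hf : (Function.support f).Finite) :
    ∑ᶠ i : ℤ, f i = (∑ᶠ j : ℤ, f (2 * j)) + (∑ᶠ j : ℤ, f (2 * j + 1)) := by
  have hE : Function.Injective (fun j : ℤ => 2 * j) := by
    intro a b h; simp only at h; omega
  have hO : Function.Injective (fun j : ℤ => 2 * j + 1) := by
    intro a b h; simp only at h; omega
  have huniv : Set.range (fun j : ℤ => 2 * j) ∪ Set.range (fun j : ℤ => 2 * j + 1)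
      = Set.univ := by
    ext i
    simp only [Set.mem_union, Set.mem_range, Set.mem_univ, iff_true]
    rcases Int.even_or_odd i with ⟨k, hk⟩ | ⟨k, hk⟩
    · exact Or.inl ⟨k, by omega⟩
    · exact Or.inr ⟨k, by omega⟩
  have hdisj : Disjoint (Set.range (fun j : ℤ => 2 * j))
      (Set.range (fun j : ℤ => 2 * j + 1)) := by
    rw [Set.disjoint_left]
    rintro x ⟨a, rfl⟩ ⟨b, hb⟩
    simp only at hb
    omega
  calc ∑ᶠ i : ℤ, f i = ∑ᶠ i ∈ (Set.univ : Set ℤ), f i := (finsum_mem_univ f).symm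
    _ = ∑ᶠ i ∈ Set.range (fun j : ℤ => 2 * j) ∪ Set.range (fun j : ℤ => 2 * j + 1), f i := by
        rw [huniv]
    _ = (∑ᶠ i ∈ Set.range (fun j : ℤ => 2 * j), f i)
        + ∑ᶠ i ∈ Set.range (fun j : ℤ => 2 * j + 1), f i :=
        finsum_mem_union' hdisj (hf.inter_of_right _) (hf.inter_of_right _)
    _ = (∑ᶠ j : ℤ, f (2 * j)) + (∑ᶠ j : ℤ, f (2 * j + 1)) := by
        rw [finsum_mem_range hE, finsum_mem_range hO]

/-- Key convolution lemma. -/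
lemma conv_shift (f g : ℤ → ℝ) (hf : (Function.support f).Finite)
    (hg : (Function.support g).Finite) (c : ℤ) :
    (∑ᶠ j : ℤ, ∑ᶠ k : ℤ, f (c + 2 * j - 2 * k) * g k)
      = (∑ᶠ j : ℤ, f (c + 2 * j)) * ∑ᶠ k : ℤ, g k := by
  classical
  set sf := hf.toFinset with hsf
  set sg := hg.toFinset with hsg
  set S : Finset ℤ := (sf ×ˢ sg).image (fun p : ℤ × ℤ => (p.1 + 2 * p.2 - c) / 2) with hS
  have key : ∀ j k : ℤ, f (c + 2 * j - 2 * k) ≠ 0 → g k ≠ 0 → j ∈ S := by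
    intro j k h1 h2
    refine Finset.mem_image.2 ⟨(c + 2 * j - 2 * k, k), Finset.mem_product.2 ⟨?_, ?_⟩, by omega⟩
    · simpa [hsf] using h1
    · simpa [hsg] using h2
  have hsupp : (Function.support fun j : ℤ => ∑ᶠ k : ℤ, f (c + 2 * j - 2 * k) * g k)
      ⊆ (S : Set ℤ) := by
    intro j hj
    by_contra hjS
    apply hj
    apply finsum_eq_zero_of_forall_eq_zero
    intro k
    by_cases hk : g k = 0
    · simp [hk]
    · by_cases hfk : f (c + 2 * j - 2 * k) = 0
      · simp [hfk]
      · exact absurd (key j k hfk hk) hjS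
  have hinner : ∀ j : ℤ, (∑ᶠ k : ℤ, f (c + 2 * j - 2 * k) * g k)
      = ∑ k ∈ sg, f (c + 2 * j - 2 * k) * g k := by
    intro j
    apply finsum_eq_finset_sum_of_support_subset
    intro k hk
    have : g k ≠ 0 := by
      intro h0
      apply hk
      simp [h0]
    simpa [hsg] using this
  rw [finsum_eq_finset_sum_of_support_subset _ hsupp]
  calc (∑ j ∈ S, ∑ᶠ k : ℤ, f (c + 2 * j - 2 * k) * g k)
      = ∑ j ∈ S, ∑ k ∈ sg, f (c + 2 * j - 2 * k) * g k := by
        exact Finset.sum_congr rfl fun j _ => hinner j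
    _ = ∑ k ∈ sg, ∑ j ∈ S, f (c + 2 * j - 2 * k) * g k := Finset.sum_comm
    _ = ∑ k ∈ sg, (∑ j ∈ S, f (c + 2 * j - 2 * k)) * g k := by
        exact Finset.sum_congr rfl fun k _ => (Finset.sum_mul ..).symm
    _ = ∑ k ∈ sg, (∑ᶠ j : ℤ, f (c + 2 * j)) * g k := by
        refine Finset.sum_congr rfl fun k _ => ?_
        by_cases hk : g k = 0
        · simp [hk]
        · congr 1
          have h1 : (∑ j ∈ S, f (c + 2 * j - 2 * k)) = ∑ᶠ j : ℤ, f (c + 2 * j - 2 * k) := by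
            symm
            apply finsum_eq_finset_sum_of_support_subset
            intro j hj
            exact key j k hj hk
          rw [h1]
          have h2 : (∑ᶠ j : ℤ, f (c + 2 * j)) = ∑ᶠ j : ℤ, f (c + 2 * ((Equiv.addRight k) j) - 2 * k) := by
            refine finsum_congr fun j => ?_
            simp only [Equiv.coe_addRight]
            ring_nf
          rw [h2]
          exact (finsum_comp_equiv (Equiv.addRight k)
            (f := fun j => f (c + 2 * j - 2 * k))).symm
    _ = (∑ᶠ j : ℤ, f (c + 2 * j)) * ∑ k ∈ sg, g k := by rw [← Finset.mul_sum]
    _ = (∑ᶠ j : ℤ, f (c + 2 * j)) * ∑ᶠ k : ℤ, g k := by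
        congr 1
        symm
        apply finsum_eq_finset_sum_of_support_subset
        intro k hk
        simpa [hsg] using hk

lemma iter_support (q : ℤ → ℝ) (hq : (Function.support q).Finite) (L : ℕ) :
    (Function.support (iterCoeff q L)).Finite := by
  induction L with
  | zero =>
    apply Set.Finite.subset (Set.finite_singleton (0 : ℤ))
    intro i hi
    have : i = 0 := by
      by_contra h0
      simp [iterCoeff, h0] at hi
    simp [this]
  | succ L ih =>
    apply Set.Finite.subset ((hq.prod ih).image (fun p : ℤ × ℤ => p.1 + 2 * p.2))
    intro i hi
    simp only [iterCoeff, Function.mem_support] at hi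
    by_contra h
    apply hi
    apply finsum_eq_zero_of_forall_eq_zero
    intro k
    by_cases hk : iterCoeff q L k = 0
    · simp [hk]
    by_cases hfk : q (i - 2 * k) = 0
    · simp [hfk]
    exfalso
    apply h
    have hm := Set.mem_image_of_mem (fun p : ℤ × ℤ => p.1 + 2 * p.2)
      (Set.mk_mem_prod (Function.mem_support.mpr hfk) (Function.mem_support.mpr hk))
    have heq : i - 2 * k + 2 * k = i := by ring
    simp only at hm
    rwa [heq] at hm

lemma iter_total (q : ℤ → ℝ) (hq : (Function.support q).Finite)
    (hsum : ∑ᶠ i : ℤ, q i = 1) (L : ℕ) : ∑ᶠ i : ℤ, iterCoeff q L i = 1 := by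
  induction L with
  | zero =>
    have h0 : ∑ᶠ i : ℤ, iterCoeff q 0 i = iterCoeff q 0 0 :=
      finsum_eq_single _ 0 (fun x hx => by simp [iterCoeff, hx])
    rw [h0]
    simp [iterCoeff]
  | succ L ih =>
    have hfin : (Function.support (iterCoeff q (L + 1))).Finite := iter_support q hq _
    rw [parity_split _ hfin]
    have heven : (∑ᶠ j : ℤ, iterCoeff q (L + 1) (2 * j))
        = (∑ᶠ j : ℤ, q (0 + 2 * j)) * ∑ᶠ k : ℤ, iterCoeff q L k := by
      rw [← conv_shift q (iterCoeff q L) hq (iter_support q hq L) 0]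
      refine finsum_congr fun j => ?_
      show iterCoeff q (L+1) (2*j) = _
      simp only [iterCoeff]
      refine finsum_congr fun k => ?_
      ring_nf
    have hodd : (∑ᶠ j : ℤ, iterCoeff q (L + 1) (2 * j + 1))
        = (∑ᶠ j : ℤ, q (1 + 2 * j)) * ∑ᶠ k : ℤ, iterCoeff q L k := by
      rw [← conv_shift q (iterCoeff q L) hq (iter_support q hq L) 1]
      refine finsum_congr fun j => ?_
      have h2 : (2 * j + 1 : ℤ) = 1 + 2 * j := by ring
      rw [h2]
      show iterCoeff q (L+1) (1 + 2*j) = _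
      simp only [iterCoeff]
    have hq01 : (∑ᶠ j : ℤ, q (0 + 2 * j)) + (∑ᶠ j : ℤ, q (1 + 2 * j)) = 1 := by
      have e0 : (∑ᶠ j : ℤ, q (0 + 2 * j)) = ∑ᶠ j : ℤ, q (2 * j) :=
        finsum_congr fun j => by rw [zero_add]
      have e1 : (∑ᶠ j : ℤ, q (1 + 2 * j)) = ∑ᶠ j : ℤ, q (2 * j + 1) :=
        finsum_congr fun j => by rw [add_comm]
      rw [e0, e1, ← parity_split q hq, hsum]
    rw [heven, hodd, ih, mul_one, mul_one, hq01]

lemma abs_finsum_le (f : ℤ → ℝ) (hf : (Function.support f).Finite) :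
    |∑ᶠ i : ℤ, f i| ≤ ∑ᶠ i : ℤ, |f i| := by
  classical
  have h1 : (∑ᶠ i : ℤ, f i) = ∑ i ∈ hf.toFinset, f i :=
    finsum_eq_finset_sum_of_support_subset _ (by simp)
  have h2 : (∑ᶠ i : ℤ, |f i|) = ∑ i ∈ hf.toFinset, |f i| := by
    apply finsum_eq_finset_sum_of_support_subset
    intro i hi
    simp only [Function.mem_support, abs_ne_zero] at hi
    simpa using hi
  rw [h1, h2]
  exact Finset.abs_sum_le_sum_abs f _

end IterAux

/-- If `q` is finitely supported with `q(1) = 1` and `|q(-1)| > 1`, then for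
every `L ≥ 1`, `max { ∑_j |q^{[L]}_{2j}|, ∑_j |q^{[L]}_{2j+1}| } ≥ max { |S_e|, |S_o| } > 1`,
where `S_e = ∑_j q_{2j}` and `S_o = ∑_j q_{2j+1}`. -/
theorem iter_norm_gt_one_of_abs_symbol_at_neg_one_gt_one (q : ℤ → ℝ)
    (hfin : (Function.support q).Finite) (hsum : ∑ᶠ i : ℤ, q i = 1)
    (hneg : 1 < |∑ᶠ i : ℤ, (-1 : ℝ) ^ i * q i|) (L : ℕ) (hL : 1 ≤ L) :
    max (|∑ᶠ j : ℤ, q (2 * j)|) (|∑ᶠ j : ℤ, q (2 * j + 1)|) ≤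
      max (∑ᶠ j : ℤ, |iterCoeff q L (2 * j)|) (∑ᶠ j : ℤ, |iterCoeff q L (2 * j + 1)|) ∧
    1 < max (|∑ᶠ j : ℤ, q (2 * j)|) (|∑ᶠ j : ℤ, q (2 * j + 1)|) := by
  set Se := ∑ᶠ j : ℤ, q (2 * j) with hSe
  set So := ∑ᶠ j : ℤ, q (2 * j + 1) with hSo
  -- Se + So = 1
  have h1 : Se + So = 1 := by rw [hSe, hSo, ← IterAux.parity_split q hfin, hsum]
  -- alternating sum = Se - So
  have hg : (Function.support fun i : ℤ => (-1 : ℝ) ^ i * q i) ⊆ Function.support q := by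
    intro i hi
    simp only [Function.mem_support] at hi ⊢
    intro h0
    apply hi
    rw [h0, mul_zero]
  have halt : (∑ᶠ i : ℤ, (-1 : ℝ) ^ i * q i) = Se - So := by
    rw [IterAux.parity_split _ (hfin.subset hg)]
    have e0 : (∑ᶠ j : ℤ, (-1 : ℝ) ^ (2 * j) * q (2 * j)) = Se := by
      rw [hSe]
      refine finsum_congr fun j => ?_
      have : ((-1 : ℝ)) ^ (2 * j) = 1 := by
        rw [zpow_mul]
        norm_num
      rw [this, one_mul]
    have e1 : (∑ᶠ j : ℤ, (-1 : ℝ) ^ (2 * j + 1) * q (2 * j + 1)) = -So := by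
      rw [hSo, ← finsum_neg_distrib]
      refine finsum_congr fun j => ?_
      have : ((-1 : ℝ)) ^ (2 * j + 1) = -1 := by
        rw [zpow_add₀ (by norm_num : (-1 : ℝ) ≠ 0), zpow_mul]
        norm_num
      rw [this]
      ring
    rw [e0, e1]
    ring
  rw [halt] at hneg
  constructor
  · -- main inequality
    obtain ⟨M, rfl⟩ : ∃ M, L = M + 1 := ⟨L - 1, by omega⟩
    have hT : ∑ᶠ i : ℤ, iterCoeff q M i = 1 := IterAux.iter_total q hfin hsum M
    have heven : (∑ᶠ j : ℤ, iterCoeff q (M + 1) (2 * j)) = Se := by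
      have := IterAux.conv_shift q (iterCoeff q M) hfin (IterAux.iter_support q hfin M) 0
      rw [hT, mul_one] at this
      calc (∑ᶠ j : ℤ, iterCoeff q (M + 1) (2 * j))
          = ∑ᶠ j : ℤ, ∑ᶠ k : ℤ, q (0 + 2 * j - 2 * k) * iterCoeff q M k := by
            refine finsum_congr fun j => ?_
            show iterCoeff q (M+1) (2*j) = _
            simp only [iterCoeff]
            refine finsum_congr fun k => ?_
            ring_nf
        _ = ∑ᶠ j : ℤ, q (0 + 2 * j) := this
        _ = Se := by rw [hSe]; exact finsum_congr fun j => by rw [zero_add]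
    have hodd : (∑ᶠ j : ℤ, iterCoeff q (M + 1) (2 * j + 1)) = So := by
      have := IterAux.conv_shift q (iterCoeff q M) hfin (IterAux.iter_support q hfin M) 1
      rw [hT, mul_one] at this
      calc (∑ᶠ j : ℤ, iterCoeff q (M + 1) (2 * j + 1))
          = ∑ᶠ j : ℤ, ∑ᶠ k : ℤ, q (1 + 2 * j - 2 * k) * iterCoeff q M k := by
            refine finsum_congr fun j => ?_
            have h2 : (2 * j + 1 : ℤ) = 1 + 2 * j := by ring
            rw [h2]
            show iterCoeff q (M+1) (1 + 2*j) = _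
            simp only [iterCoeff]
        _ = ∑ᶠ j : ℤ, q (1 + 2 * j) := this
        _ = So := by rw [hSo]; exact finsum_congr fun j => by rw [add_comm]
    have hfinL : (Function.support (iterCoeff q (M + 1))).Finite :=
      IterAux.iter_support q hfin _
    have hfe : (Function.support fun j : ℤ => iterCoeff q (M + 1) (2 * j)).Finite := by
      apply Set.Finite.preimage (f := fun j : ℤ => 2 * j) _ hfinL
      exact Set.injOn_of_injective (fun a b h => by omega)
    have hfo : (Function.support fun j : ℤ => iterCoeff q (M + 1) (2 * j + 1)).Finite := by
      apply Set.Finite.preimage (f := fun j : ℤ => 2 * j + 1) _ hfinL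
      exact Set.injOn_of_injective (fun a b h => by omega)
    have he : |Se| ≤ ∑ᶠ j : ℤ, |iterCoeff q (M + 1) (2 * j)| := by
      rw [← heven]
      exact IterAux.abs_finsum_le _ hfe
    have ho : |So| ≤ ∑ᶠ j : ℤ, |iterCoeff q (M + 1) (2 * j + 1)| := by
      rw [← hodd]
      exact IterAux.abs_finsum_le _ hfo
    exact max_le_max he ho
  · -- 1 < max |Se| |So|
    rcases lt_abs.mp hneg with h | h
    · have : 1 < Se := by linarith
      exact lt_max_of_lt_left (this.trans_le (le_abs_self _))
    · have : 1 < So := by linarith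
      exact lt_max_of_lt_right (this.trans_le (le_abs_self _))
end

section
/- Let q : ℤ → ℝ be a finitely supported sequence and let S_q be the subdivision operator (S_q f)_i = ∑_{j∈ℤ} q_{i−2j} f_j acting on bounded sequences f : ℤ → ℝ. Then the ℓ∞ operator norm of S_q equals max{ ∑_{j∈ℤ} |q_{2j}| , ∑_{j∈ℤ} |q_{2j+1}| }; that is, this number η satisfies ‖S_q f‖ ≤ η‖f‖ for all bounded f, and it is the minimal constant with this property (equivalently, η = sup over bounded nonzero f of ‖S_q f‖/‖f‖). -/
open Filter Topology

section aux

variable {q : ℤ → ℝ}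

lemma pre_fin (hfin : (Function.support q).Finite) (i : ℤ) :
    ((fun j : ℤ => i - 2 * j) ⁻¹' Function.support q).Finite :=
  Set.Finite.preimage (Set.injOn_of_injective (fun a b h => by omega)) hfin

lemma supp_sub (i : ℤ) (f : ℤ → ℝ) :
    Function.support (fun j : ℤ => q (i - 2 * j) * f j) ⊆
      (fun j : ℤ => i - 2 * j) ⁻¹' Function.support q := by
  intro j hj
  simp only [Function.mem_support] at hj ⊢
  intro h0
  exact hj (by rw [h0, zero_mul])

lemma supp_abs (i : ℤ) :
    Function.support (fun j : ℤ => |q (i - 2 * j)|) ⊆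
      (fun j : ℤ => i - 2 * j) ⁻¹' Function.support q := by
  intro j hj
  simp only [Function.mem_support] at hj ⊢
  intro h0
  exact hj (by rw [h0, abs_zero])

lemma subdiv_abs_le (hfin : (Function.support q).Finite) (f : ℤ → ℝ) {C : ℝ}
    (hC : ∀ j, |f j| ≤ C) (i : ℤ) :
    |subdiv q f i| ≤ (∑ᶠ j : ℤ, |q (i - 2 * j)|) * C := by
  have hC0 : 0 ≤ C := le_trans (abs_nonneg _) (hC 0)
  set P := (pre_fin hfin i).toFinset with hP
  have hsub : Function.support (fun j : ℤ => q (i - 2 * j) * f j) ⊆ ↑P := by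
    rw [hP, Set.Finite.coe_toFinset]; exact supp_sub i f
  have habs : Function.support (fun j : ℤ => |q (i - 2 * j)|) ⊆ ↑P := by
    rw [hP, Set.Finite.coe_toFinset]; exact supp_abs i
  rw [show subdiv q f i = ∑ j ∈ P, q (i - 2 * j) * f j from
    finsum_eq_sum_of_support_subset _ hsub,
    finsum_eq_sum_of_support_subset _ habs]
  calc |∑ j ∈ P, q (i - 2 * j) * f j| ≤ ∑ j ∈ P, |q (i - 2 * j) * f j| :=
        Finset.abs_sum_le_sum_abs _ _
    _ ≤ ∑ j ∈ P, |q (i - 2 * j)| * C := by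
        apply Finset.sum_le_sum
        intro j _
        rw [abs_mul]
        exact mul_le_mul_of_nonneg_left (hC j) (abs_nonneg _)
    _ = (∑ j ∈ P, |q (i - 2 * j)|) * C := by rw [Finset.sum_mul]

lemma even_shift (m : ℤ) : (∑ᶠ j : ℤ, |q (2 * m - 2 * j)|) = ∑ᶠ j : ℤ, |q (2 * j)| := by
  have := finsum_comp_equiv (Equiv.subLeft m) (f := fun j : ℤ => |q (2 * j)|)
  rw [← this]
  apply finsum_congr
  intro j
  simp only [Equiv.subLeft_apply]
  ring_nf

lemma odd_shift (m : ℤ) : (∑ᶠ j : ℤ, |q (2 * m + 1 - 2 * j)|) = ∑ᶠ j : ℤ, |q (2 * j + 1)| := by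
  have := finsum_comp_equiv (Equiv.subLeft m) (f := fun j : ℤ => |q (2 * j + 1)|)
  rw [← this]
  apply finsum_congr
  intro j
  simp only [Equiv.subLeft_apply]
  ring_nf

lemma col_le_eta (hfin : (Function.support q).Finite) (i : ℤ) :
    (∑ᶠ j : ℤ, |q (i - 2 * j)|) ≤
      max (∑ᶠ j : ℤ, |q (2 * j)|) (∑ᶠ j : ℤ, |q (2 * j + 1)|) := by
  rcases Int.even_or_odd i with ⟨m, hm⟩ | ⟨m, hm⟩
  · refine le_max_of_le_left (le_of_eq ?_)
    rw [← even_shift (q := q) m]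
    apply finsum_congr; intro j; rw [hm]; try ring_nf
  · refine le_max_of_le_right (le_of_eq ?_)
    rw [← odd_shift (q := q) m]
    apply finsum_congr; intro j; rw [hm]; try ring_nf

lemma sign_abs_le (x : ℝ) : |Real.sign x| ≤ 1 := by
  rcases lt_trichotomy x 0 with h | h | h
  · rw [Real.sign_of_neg h]; norm_num
  · rw [h, Real.sign_zero]; norm_num
  · rw [Real.sign_of_pos h]; norm_num

lemma mul_sign (x : ℝ) : x * Real.sign x = |x| := by
  rcases lt_trichotomy x 0 with h | h | h
  · rw [Real.sign_of_neg h, abs_of_neg h]; ring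
  · simp [h]
  · rw [Real.sign_of_pos h, abs_of_pos h]; ring

end aux

/-- For a finitely supported `q`, the number
`η = max { ∑_j |q_{2j}|, ∑_j |q_{2j+1}| }` is the ℓ∞ operator norm of the subdivision
operator `S_q`: `‖S_q f‖ ≤ η ‖f‖` for every bounded `f`, and `η` is the minimal constant
with this property. -/
theorem subdiv_operator_norm (q : ℤ → ℝ) (hfin : (Function.support q).Finite) :
    (∀ f : ℤ → ℝ, Bdd f →
      (⨆ i : ℤ, |subdiv q f i|) ≤
        max (∑ᶠ j : ℤ, |q (2 * j)|) (∑ᶠ j : ℤ, |q (2 * j + 1)|) * ⨆ i : ℤ, |f i|) ∧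
    (∀ c : ℝ,
      (∀ f : ℤ → ℝ, Bdd f → (⨆ i : ℤ, |subdiv q f i|) ≤ c * ⨆ i : ℤ, |f i|) →
      max (∑ᶠ j : ℤ, |q (2 * j)|) (∑ᶠ j : ℤ, |q (2 * j + 1)|) ≤ c) := by
  set η := max (∑ᶠ j : ℤ, |q (2 * j)|) (∑ᶠ j : ℤ, |q (2 * j + 1)|) with hη
  have key : ∀ f : ℤ → ℝ, ∀ C : ℝ, (∀ j, |f j| ≤ C) → ∀ i, |subdiv q f i| ≤ η * C := by
    intro f C hC i
    have hC0 : 0 ≤ C := le_trans (abs_nonneg _) (hC 0)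
    exact le_trans (subdiv_abs_le hfin f hC i)
      (mul_le_mul_of_nonneg_right (col_le_eta hfin i) hC0)
  constructor
  · intro f hf
    obtain ⟨B, hB⟩ := hf
    have hbdd : BddAbove (Set.range fun i => |f i|) := ⟨B, by rintro _ ⟨i, rfl⟩; exact hB i⟩
    have hC : ∀ j, |f j| ≤ ⨆ i : ℤ, |f i| := fun j => le_ciSup hbdd j
    exact ciSup_le fun i => key f _ hC i
  · intro c hc
    -- c ≥ 0
    have hc0 : 0 ≤ c := by
      have h1 := hc (fun _ => 1) ⟨1, fun i => by norm_num⟩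
      have hbdd : BddAbove (Set.range fun i => |subdiv q (fun _ => (1:ℝ)) i|) :=
        ⟨η * 1, by rintro _ ⟨i, rfl⟩; exact key _ 1 (fun j => by norm_num) i⟩
      have h0 : (0:ℝ) ≤ ⨆ i : ℤ, |subdiv q (fun _ => (1:ℝ)) i| :=
        le_trans (abs_nonneg _) (le_ciSup hbdd 0)
      have : (⨆ i : ℤ, |(1:ℝ)|) = 1 := by simp
      rw [this, mul_one] at h1
      exact le_trans h0 h1
    have main : ∀ i₀ : ℤ, (∑ᶠ j : ℤ, |q (i₀ - 2 * j)|) ≤ c := by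
      intro i₀
      set f : ℤ → ℝ := fun j => Real.sign (q (i₀ - 2 * j)) with hfdef
      have hf1 : ∀ j, |f j| ≤ 1 := fun j => sign_abs_le _
      have hval : subdiv q f i₀ = ∑ᶠ j : ℤ, |q (i₀ - 2 * j)| := by
        unfold subdiv
        apply finsum_congr
        intro j
        exact mul_sign _
      have hbdd : BddAbove (Set.range fun i => |subdiv q f i|) :=
        ⟨η * 1, by rintro _ ⟨i, rfl⟩; exact key f 1 hf1 i⟩
      have h2 := hc f ⟨1, hf1⟩
      have h3 : (⨆ i : ℤ, |f i|) ≤ 1 := ciSup_le hf1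
      calc (∑ᶠ j : ℤ, |q (i₀ - 2 * j)|) = subdiv q f i₀ := hval.symm
        _ ≤ |subdiv q f i₀| := le_abs_self _
        _ ≤ ⨆ i : ℤ, |subdiv q f i| := le_ciSup hbdd i₀
        _ ≤ c * ⨆ i : ℤ, |f i| := h2
        _ ≤ c * 1 := mul_le_mul_of_nonneg_left h3 hc0
        _ = c := mul_one c
    apply max_le
    · calc (∑ᶠ j : ℤ, |q (2 * j)|) = ∑ᶠ j : ℤ, |q (0 - 2 * j)| := by
            rw [← even_shift (q := q) 0]
            apply finsum_congr; intro j; ring_nf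
        _ ≤ c := main 0
    · calc (∑ᶠ j : ℤ, |q (2 * j + 1)|) = ∑ᶠ j : ℤ, |q (1 - 2 * j)| := by
            rw [← odd_shift (q := q) 0]
            apply finsum_congr; intro j; ring_nf
        _ ≤ c := main 1
end

section
/- Let a : ℤ → ℝ be a finitely supported mask whose symbol satisfies a(1) = 2 and a(−1) = 0, write a(z) = (1 + z)·q(z) with q finitely supported, and for L ≥ 1 let q^{[L]} be the coefficient sequence of q^{[L]}(z) = q(z)·q(z²)⋯q(z^{2^{L−1}}). If the subdivision scheme S_a is uniformly convergent, then for every integer L ≥ 1, max{ ∑_{j∈ℤ} |q^{[L]}_{2j}| , ∑_{j∈ℤ} |q^{[L]}_{2j+1}| } ≥ 1/2; that is, the ℓ∞ operator norm of every power of the difference scheme S_q is at least one half. -/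
open Filter Topology

open Function in
lemma conv_support_finite (f g : ℤ → ℝ) (hf : (support f).Finite) (hg : (support g).Finite) :
    (support (fun i => ∑ᶠ j : ℤ, f (i - 2 * j) * g j)).Finite := by
  apply Set.Finite.subset ((hf.prod hg).image (fun p => p.1 + 2 * p.2))
  intro i hi
  simp only [mem_support] at hi
  have : ∃ j, f (i - 2 * j) * g j ≠ 0 := by
    by_contra h
    push_neg at h
    exact hi (finsum_eq_zero_of_forall_eq_zero h)
  obtain ⟨j, hj⟩ := this
  have hfne : f (i - 2 * j) ≠ 0 := fun h => hj (by simp [h])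
  have hgne : g j ≠ 0 := fun h => hj (by simp [h])
  exact ⟨(i - 2 * j, j), ⟨hfne, hgne⟩, by dsimp; ring⟩

open Function in
lemma conv_sum (f g : ℤ → ℝ) (hf : (support f).Finite) (hg : (support g).Finite) :
    ∑ᶠ i : ℤ, ∑ᶠ j : ℤ, f (i - 2 * j) * g j = (∑ᶠ i, f i) * (∑ᶠ j, g j) := by
  classical
  set t := hg.toFinset with ht
  set u := Finset.image (fun p : ℤ × ℤ => p.1 + 2 * p.2) (hf.toFinset ×ˢ t) with hu
  have hinner : ∀ i, ∑ᶠ j : ℤ, f (i - 2 * j) * g j = ∑ j ∈ t, f (i - 2 * j) * g j := by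
    intro i
    apply finsum_eq_sum_of_support_subset
    intro j hj
    simp only [mem_support] at hj
    have : g j ≠ 0 := fun h => hj (by simp [h])
    simpa [ht, hg.mem_toFinset] using this
  have houter : support (fun i => ∑ j ∈ t, f (i - 2 * j) * g j) ⊆ ↑u := by
    intro i hi
    simp only [mem_support] at hi
    obtain ⟨j, hjt, hne⟩ := Finset.exists_ne_zero_of_sum_ne_zero hi
    have hfne : f (i - 2 * j) ≠ 0 := fun h => hne (by simp [h])
    exact Finset.mem_coe.2 (Finset.mem_image.2 ⟨(i - 2 * j, j),
      Finset.mem_product.2 ⟨hf.mem_toFinset.2 hfne, hjt⟩, by dsimp; ring⟩)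
  have hstep : ∀ j ∈ t, ∑ i ∈ u, f (i - 2 * j) * g j = (∑ᶠ i, f i) * g j := by
    intro j hjt
    rw [← Finset.sum_mul]
    congr 1
    have hsub : support (fun i => f (i - 2 * j)) ⊆ ↑u := by
      intro i hi
      simp only [mem_support] at hi
      exact Finset.mem_coe.2 (Finset.mem_image.2 ⟨(i - 2 * j, j),
        Finset.mem_product.2 ⟨hf.mem_toFinset.2 hi, hjt⟩, by dsimp; ring⟩)
    rw [← finsum_eq_sum_of_support_subset _ hsub]
    exact finsum_comp_equiv (Equiv.subRight (2 * j))
  calc ∑ᶠ i : ℤ, ∑ᶠ j : ℤ, f (i - 2 * j) * g j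
      = ∑ᶠ i : ℤ, ∑ j ∈ t, f (i - 2 * j) * g j := finsum_congr hinner
    _ = ∑ i ∈ u, ∑ j ∈ t, f (i - 2 * j) * g j := finsum_eq_sum_of_support_subset _ houter
    _ = ∑ j ∈ t, ∑ i ∈ u, f (i - 2 * j) * g j := Finset.sum_comm
    _ = ∑ j ∈ t, (∑ᶠ i, f i) * g j := Finset.sum_congr rfl hstep
    _ = (∑ᶠ i, f i) * ∑ j ∈ t, g j := by rw [Finset.mul_sum]
    _ = (∑ᶠ i, f i) * ∑ᶠ j, g j := by rw [finsum_eq_sum g hg]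

open Function in
lemma iter_support_finite (q : ℤ → ℝ) (hq : (support q).Finite) (L : ℕ) :
    (support (iterCoeff q L)).Finite := by
  induction L with
  | zero =>
    apply Set.Finite.subset (Set.finite_singleton 0)
    intro i hi
    rcases eq_or_ne i 0 with h | h
    · simp [h]
    · simp [iterCoeff, h, mem_support] at hi
  | succ L ih => exact conv_support_finite q _ hq ih

open Function in
lemma iter_sum (q : ℤ → ℝ) (hq : (support q).Finite) (hq1 : ∑ᶠ i, q i = 1) (L : ℕ) :
    ∑ᶠ i, iterCoeff q L i = 1 := by
  induction L with
  | zero =>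
    rw [show iterCoeff q 0 = fun i => if i = 0 then 1 else 0 from rfl]
    rw [finsum_eq_single _ (0 : ℤ) (fun x hx => by simp [hx])]
    simp
  | succ L ih =>
    have : ∑ᶠ i, iterCoeff q (L + 1) i
        = ∑ᶠ i : ℤ, ∑ᶠ j : ℤ, q (i - 2 * j) * iterCoeff q L j := rfl
    rw [this, conv_sum q _ hq (iter_support_finite q hq L), hq1, ih, one_mul]

open Function in
lemma even_support_finite (f : ℤ → ℝ) (hf : (support f).Finite) :
    (support (fun j => f (2 * j))).Finite := by
  have : support (fun j : ℤ => f (2 * j)) ⊆ (fun j : ℤ => 2 * j) ⁻¹' (support f) :=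
    fun j hj => hj
  exact (hf.preimage (fun a _ b _ h => by omega)).subset this

open Function in
lemma odd_support_finite (f : ℤ → ℝ) (hf : (support f).Finite) :
    (support (fun j => f (2 * j + 1))).Finite := by
  have : support (fun j : ℤ => f (2 * j + 1)) ⊆ (fun j : ℤ => 2 * j + 1) ⁻¹' (support f) :=
    fun j hj => hj
  exact (hf.preimage (fun a _ b _ h => by omega)).subset this

open Function in
lemma parity_split (f : ℤ → ℝ) (hf : (support f).Finite) :
    ∑ᶠ i, f i = (∑ᶠ j : ℤ, f (2 * j)) + (∑ᶠ j : ℤ, f (2 * j + 1)) := by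
  classical
  have he := even_support_finite f hf
  have ho := odd_support_finite f hf
  set t := he.toFinset ∪ ho.toFinset with hts
  have hE : ∑ᶠ j : ℤ, f (2 * j) = ∑ j ∈ t, f (2 * j) :=
    finsum_eq_sum_of_support_subset _ (fun j hj => by
      simp only [hts, Finset.coe_union, Set.mem_union]
      exact Or.inl (he.mem_toFinset.2 hj))
  have hO : ∑ᶠ j : ℤ, f (2 * j + 1) = ∑ j ∈ t, f (2 * j + 1) :=
    finsum_eq_sum_of_support_subset _ (fun j hj => by
      simp only [hts, Finset.coe_union, Set.mem_union]
      exact Or.inr (ho.mem_toFinset.2 hj))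
  set ue := t.image (fun j => 2 * j) with hue
  set uo := t.image (fun j => 2 * j + 1) with huo
  have hdisj : Disjoint ue uo := by
    rw [Finset.disjoint_left]
    intro x hxe hxo
    obtain ⟨a, _, ha⟩ := Finset.mem_image.1 hxe
    obtain ⟨b, _, hb⟩ := Finset.mem_image.1 hxo
    omega
  have hcover : support f ⊆ ↑(ue ∪ uo) := by
    intro i hi
    rcases Int.even_or_odd i with ⟨j, hj⟩ | ⟨j, hj⟩
    · have hij : i = 2 * j := by omega
      have : f (2 * j) ≠ 0 := by rw [← hij]; exact hi
      have hjt : j ∈ t := Finset.mem_union_left _ (he.mem_toFinset.2 this)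
      exact Finset.mem_coe.2 (Finset.mem_union_left _
        (Finset.mem_image.2 ⟨j, hjt, hij.symm⟩))
    · have hij : i = 2 * j + 1 := by omega
      have : f (2 * j + 1) ≠ 0 := by rw [← hij]; exact hi
      have hjt : j ∈ t := Finset.mem_union_right _ (ho.mem_toFinset.2 this)
      exact Finset.mem_coe.2 (Finset.mem_union_right _
        (Finset.mem_image.2 ⟨j, hjt, hij.symm⟩))
  rw [finsum_eq_sum_of_support_subset _ hcover, Finset.sum_union hdisj, hE, hO]
  congr 1
  · rw [hue, Finset.sum_image (fun a _ b _ h => by omega)]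
  · rw [huo, Finset.sum_image (fun a _ b _ h => by omega)]

open Function in
lemma abs_finsum_le (g : ℤ → ℝ) (hg : (support g).Finite) :
    |∑ᶠ i, g i| ≤ ∑ᶠ i, |g i| := by
  rw [finsum_eq_sum g hg, finsum_eq_sum_of_support_subset (fun i => |g i|)
    (s := hg.toFinset) (fun i hi => hg.mem_toFinset.2 (fun h => by simp [mem_support, h] at hi))]
  exact Finset.abs_sum_le_sum_abs _ _

/-- Let `a` be a finitely supported mask with `a(1) = 2`, `a(-1) = 0` and
`a(z) = (1+z) q(z)` with `q` finitely supported. If the scheme `S_a` is uniformly convergent,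
then for every `L ≥ 1` the ℓ∞ operator norm of `S_q^L`, namely
`max { ∑_j |q^{[L]}_{2j}|, ∑_j |q^{[L]}_{2j+1}| }`, is at least `1/2`. -/
theorem iter_difference_norm_ge_half_of_convergent (a q : ℤ → ℝ)
    (ha : (Function.support a).Finite) (hq : (Function.support q).Finite)
    (h1 : ∑ᶠ i : ℤ, a i = 2) (hm1 : ∑ᶠ i : ℤ, (-1 : ℝ) ^ i * a i = 0)
    (hfac : ∀ i : ℤ, a i = q i + q (i - 1))
    (hconv : UniformlyConvergent a) (L : ℕ) (hL : 1 ≤ L) :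
    (1 : ℝ) / 2 ≤
      max (∑ᶠ j : ℤ, |iterCoeff q L (2 * j)|) (∑ᶠ j : ℤ, |iterCoeff q L (2 * j + 1)|) := by
  have hshift : (Function.support (fun i : ℤ => q (i - 1))).Finite := by
    have : Function.support (fun i : ℤ => q (i - 1)) ⊆ (fun i : ℤ => i - 1) ⁻¹' (Function.support q) :=
      fun i hi => hi
    exact (hq.preimage (fun a _ b _ h => by omega)).subset this
  have hq1 : ∑ᶠ i, q i = 1 := by
    have h2 : ∑ᶠ i : ℤ, a i = ∑ᶠ i : ℤ, (q i + q (i - 1)) := finsum_congr hfac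
    rw [finsum_add_distrib hq hshift] at h2
    have h3 : ∑ᶠ i : ℤ, q (i - 1) = ∑ᶠ i, q i := finsum_comp_equiv (Equiv.subRight 1)
    rw [h3, h1] at h2
    linarith
  have hcfin := iter_support_finite q hq L
  have hsum := iter_sum q hq hq1 L
  have hsplit := parity_split _ hcfin
  set E := ∑ᶠ j : ℤ, iterCoeff q L (2 * j) with hEdef
  set O := ∑ᶠ j : ℤ, iterCoeff q L (2 * j + 1) with hOdef
  have hEO : E + O = 1 := by rw [← hsplit, hsum]
  have hAE : |E| ≤ ∑ᶠ j : ℤ, |iterCoeff q L (2 * j)| :=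
    abs_finsum_le _ (even_support_finite _ hcfin)
  have hAO : |O| ≤ ∑ᶠ j : ℤ, |iterCoeff q L (2 * j + 1)| :=
    abs_finsum_le _ (odd_support_finite _ hcfin)
  have h1' : (1 : ℝ) ≤ |E| + |O| := by
    calc (1 : ℝ) = |E + O| := by rw [hEO]; simp
    _ ≤ |E| + |O| := abs_add_le _ _
  have hmE := le_max_left (∑ᶠ j : ℤ, |iterCoeff q L (2 * j)|)
    (∑ᶠ j : ℤ, |iterCoeff q L (2 * j + 1)|)
  have hmO := le_max_right (∑ᶠ j : ℤ, |iterCoeff q L (2 * j)|)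
    (∑ᶠ j : ℤ, |iterCoeff q L (2 * j + 1)|)
  linarith
end
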